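/- arXiv:1904.12806 — 6 statements merged into one kernel-verified Lean document; each statement's English description precedes it below -/
import Mathlib

section
/- The antipodal circle A = {(a, -a) | a ∈ S¹} is a deformation retract of C^2(S¹): there is a homotopy H : C^2(S¹) × [0,1] → C^2(S¹) with H(x,0) = x, H(x,1) ∈ A for all x, and H(x,t) = x for x ∈ A and all t. -/
open Set

/-- The unit circle in `ℝ²`. -/
abbrev S1 : Set (ℝ × ℝ) := {p | p.1 ^ 2 + p.2 ^ 2 = 1}

/-- The ordered configuration space of two distinct points on the circle. -/
abbrev Conf2S1 : Type :=
  {p : (ℝ × ℝ) × (ℝ × ℝ) // p.1 ∈ S1 ∧ p.2 ∈ S1 ∧ p.1 ≠ p.2}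

/-!
Keep the first point `a` fixed and move the second point `b` to the normalization of
`(1 - t) • b - t • a`, which runs from `b` to `-a`. Comparing norms in `(1 - t) • b = (t + c) • a`
forces `1 - t = t + c ≠ 0`, so for `a ≠ b` this vector is never a nonnegative multiple of `a`:
it never vanishes and its normalization never meets `a`. For an antipodal pair `b = -a` it is
constantly `-a`, so those pairs stay fixed. The construction works on the unit sphere of any real
normed space, and `S1` is the unit sphere of the Euclidean plane `WithLp 2 (ℝ × ℝ)`.
-/

open unitInterval

section NormedSpace

variable {E : Type*} [NormedAddCommGroup E] [NormedSpace ℝ E]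

theorem sub_smul_ne_nonneg_smul {a b : E} (ha : ‖a‖ = 1) (hb : ‖b‖ = 1) (hab : a ≠ b)
    (t : ℝ) {c : ℝ} (hc : 0 ≤ c) : (1 - t) • b - t • a ≠ c • a := by
  intro h
  have hcomb : (1 - t) • b = (t + c) • a := by rw [add_smul, ← h, add_sub_cancel]
  have hnorm : |1 - t| = |t + c| := by
    simpa [norm_smul, ha, hb] using congrArg norm hcomb
  have hcoef : 1 - t = t + c := by
    rcases abs_eq_abs.mp hnorm with h' | h'
    · exact h'
    · linarith
  have hne : 1 - t ≠ 0 := by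
    intro h0
    linarith
  exact hab (smul_right_injective E hne (hcomb.trans (by rw [hcoef])).symm)

variable (E) in
abbrev SphereConf2 : Type _ := {p : E × E // ‖p.1‖ = 1 ∧ ‖p.2‖ = 1 ∧ p.1 ≠ p.2}

namespace SphereConf2

def retractVec (x : SphereConf2 E) (t : ℝ) : E := (1 - t) • x.val.2 - t • x.val.1

theorem retractVec_ne_zero (x : SphereConf2 E) (t : ℝ) : retractVec x t ≠ 0 := by
  simpa [retractVec] using sub_smul_ne_nonneg_smul x.2.1 x.2.2.1 x.2.2.2 t le_rfl

theorem inv_norm_smul_retractVec_ne (x : SphereConf2 E) (t : ℝ) :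
    ‖retractVec x t‖⁻¹ • retractVec x t ≠ x.val.1 := by
  intro h
  refine sub_smul_ne_nonneg_smul x.2.1 x.2.2.1 x.2.2.2 t (norm_nonneg (retractVec x t)) ?_
  calc retractVec x t = ‖retractVec x t‖ • (‖retractVec x t‖⁻¹ • retractVec x t) :=
        (smul_inv_smul₀ (norm_ne_zero_iff.mpr (retractVec_ne_zero x t)) _).symm
    _ = ‖retractVec x t‖ • x.val.1 := by rw [h]

noncomputable def antipodalRetraction : C(SphereConf2 E × I, SphereConf2 E) where
  toFun p := ⟨(p.1.val.1, ‖retractVec p.1 p.2‖⁻¹ • retractVec p.1 p.2),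
    p.1.2.1, norm_smul_inv_norm (retractVec_ne_zero _ _),
    fun h => inv_norm_smul_retractVec_ne p.1 p.2 h.symm⟩
  continuous_toFun := by
    have hv : Continuous fun p : SphereConf2 E × I => retractVec p.1 p.2 := by
      unfold retractVec; fun_prop
    refine Continuous.subtype_mk (Continuous.prodMk (by fun_prop) ?_) _
    exact ((hv.norm.inv₀ fun p => norm_ne_zero_iff.mpr (retractVec_ne_zero _ _))).smul hv

theorem retractVec_zero (x : SphereConf2 E) : retractVec x 0 = x.val.2 := by
  simp [retractVec]

theorem retractVec_one (x : SphereConf2 E) : retractVec x 1 = -x.val.1 := by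
  simp [retractVec]

theorem retractVec_of_snd_eq_neg {x : SphereConf2 E} (hx : x.val.2 = -x.val.1) (t : ℝ) :
    retractVec x t = x.val.2 := by
  rw [retractVec, hx, smul_neg, ← neg_add', ← add_smul, sub_add_cancel, one_smul]

theorem antipodalRetraction_apply_of_retractVec_eq {x : SphereConf2 E} {t : I}
    (h : retractVec x t = x.val.2) : antipodalRetraction (x, t) = x := by
  ext1
  change (x.val.1, ‖retractVec x t‖⁻¹ • retractVec x t) = x.val
  rw [h, x.2.2.1, inv_one, one_smul]

theorem antipodalRetraction_apply_zero (x : SphereConf2 E) : antipodalRetraction (x, 0) = x :=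
  antipodalRetraction_apply_of_retractVec_eq (retractVec_zero x)

theorem antipodalRetraction_apply_one_snd (x : SphereConf2 E) :
    (antipodalRetraction (x, 1)).val.2 = -(antipodalRetraction (x, 1)).val.1 := by
  change ‖retractVec x 1‖⁻¹ • retractVec x 1 = -x.val.1
  rw [retractVec_one, norm_neg, x.2.1, inv_one, one_smul]

theorem antipodalRetraction_apply_of_snd_eq_neg {x : SphereConf2 E} (hx : x.val.2 = -x.val.1)
    (t : I) : antipodalRetraction (x, t) = x :=
  antipodalRetraction_apply_of_retractVec_eq (retractVec_of_snd_eq_neg hx t)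

end SphereConf2

end NormedSpace

theorem mem_S1_iff_norm_toLp (p : ℝ × ℝ) : p ∈ S1 ↔ ‖WithLp.toLp 2 p‖ = 1 := by
  rw [WithLp.prod_norm_eq_of_L2, Real.sqrt_eq_one, Real.norm_eq_abs, Real.norm_eq_abs, sq_abs,
    sq_abs]
  rfl

def conf2S1HomeomorphSphereConf2 : Conf2S1 ≃ₜ SphereConf2 (WithLp 2 (ℝ × ℝ)) :=
  ((WithLp.homeomorphProd 2 ℝ ℝ).symm.prodCongr (WithLp.homeomorphProd 2 ℝ ℝ).symm).subtype
    fun _ => and_congr (mem_S1_iff_norm_toLp _) <|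
      and_congr (mem_S1_iff_norm_toLp _) (WithLp.toLp_injective 2).ne_iff.symm

/-- The antipodal circle `A = {(a, -a)}` is a deformation retract of `C^2(S¹)`:
there is a homotopy `H` with `H(x,0) = x`, `H(x,1) ∈ A`, and `H(x,t) = x` for `x ∈ A`. -/
theorem antipodal_circle_deformation_retract :
    ∃ H : C(Conf2S1 × unitInterval, Conf2S1),
      (∀ x, H (x, 0) = x) ∧
      (∀ x, (H (x, 1)).val.2 = -(H (x, 1)).val.1) ∧
      (∀ x : Conf2S1, x.val.2 = -x.val.1 → ∀ t, H (x, t) = x) := by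
  let e := conf2S1HomeomorphSphereConf2
  let R := SphereConf2.antipodalRetraction (E := WithLp 2 (ℝ × ℝ))
  refine ⟨(e.symm : C(_, Conf2S1)).comp (R.comp ((e : C(Conf2S1, _)).prodMap (.id I))), ?_, ?_, ?_⟩
  · intro x
    simp [R, SphereConf2.antipodalRetraction_apply_zero]
  · intro x
    exact congrArg WithLp.ofLp (SphereConf2.antipodalRetraction_apply_one_snd (e x))
  · intro x hx t
    have : (e x).val.2 = -(e x).val.1 := congrArg (WithLp.toLp 2) hx
    simp [R, SphereConf2.antipodalRetraction_apply_of_snd_eq_neg this]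
end

section
/- A globally defined continuous motion planning algorithm exists on a path-connected space X if and only if X is contractible; i.e., the evaluation map ev : C([0,1], X) → X × X, ev(α) = (α(0), α(1)), admits a continuous section if and only if X is contractible. -/
/-!
A section `s` of the endpoint map contracts `X`: `(t, x) ↦ s (x, x₀) t` is a homotopy from the
identity to the constant map at `x₀`. Conversely, a contraction `H` of `X` to `y` moves every point
`x` along the path `t ↦ H (t, x)` to `y`, continuously in `x`; going from `a` to `y` and then
backwards from `y` to `b` is a continuous choice of path from `a` to `b`.
-/

section

open ContinuousMap unitInterval

variable {X : Type*} [TopologicalSpace X]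

noncomputable def ContinuousMap.Homotopy.motionPlanner {y : X}
    (H : Homotopy (ContinuousMap.id X) (const X y)) : C(X × X, C(I, X)) where
  toFun p := ((H.evalAt p.1).trans (H.evalAt p.2).symm : Path p.1 p.2)
  continuous_toFun := by
    refine ContinuousMap.continuous_of_continuous_uncurry _ ?_
    have hγ : Continuous ↿H.evalAt := H.continuous.comp continuous_swap
    have hγ₁ : Continuous ↿fun p : X × X ↦ H.evalAt p.1 :=
      hγ.comp (f := fun q : (X × X) × I ↦ (q.1.1, q.2)) (by fun_prop)
    have hγ₂ : Continuous ↿fun p : X × X ↦ H.evalAt p.2 :=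
      hγ.comp (f := fun q : (X × X) × I ↦ (q.1.2, q.2)) (by fun_prop)
    exact Path.trans_continuous_family _ hγ₁ _ (Path.symm_continuous_family _ hγ₂)

@[simp]
theorem ContinuousMap.Homotopy.motionPlanner_apply_zero {y : X}
    (H : Homotopy (ContinuousMap.id X) (const X y)) (p : X × X) : H.motionPlanner p 0 = p.1 :=
  Path.source _

@[simp]
theorem ContinuousMap.Homotopy.motionPlanner_apply_one {y : X}
    (H : Homotopy (ContinuousMap.id X) (const X y)) (p : X × X) : H.motionPlanner p 1 = p.2 :=
  Path.target _

theorem contractibleSpace_of_motionPlanner [Nonempty X] {s : X × X → C(I, X)} (hs : Continuous s)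
    (h0 : ∀ p, s p 0 = p.1) (h1 : ∀ p, s p 1 = p.2) : ContractibleSpace X := by
  obtain ⟨x₀⟩ := ‹Nonempty X›
  rw [contractible_iff_id_nullhomotopic]
  exact ⟨x₀, ⟨{ toFun := fun q ↦ s (q.2, x₀) q.1
                continuous_toFun := by fun_prop
                map_zero_left := fun x ↦ h0 (x, x₀)
                map_one_left := fun x ↦ h1 (x, x₀) }⟩⟩

end

/-- Farber's theorem: a globally defined continuous motion planning algorithm exists on a
path-connected space `X` if and only if `X` is contractible. -/
theorem global_motion_planner_iff_contractible (X : Type*) [TopologicalSpace X]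
    [PathConnectedSpace X] :
    (∃ s : X × X → C(unitInterval, X),
        Continuous s ∧ ∀ p : X × X, s p 0 = p.1 ∧ s p 1 = p.2) ↔
      ContractibleSpace X := by
  constructor
  · rintro ⟨s, hs, hends⟩
    exact contractibleSpace_of_motionPlanner hs (fun p ↦ (hends p).1) (fun p ↦ (hends p).2)
  · intro _
    obtain ⟨y, ⟨H⟩⟩ := id_nullhomotopic X
    exact ⟨H.motionPlanner, H.motionPlanner.continuous, fun p ↦ by simp⟩
end

section
/- If X and Y are homotopy equivalent topological spaces, then TC(X) = TC(Y), where TC denotes topological complexity. -/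
/-- A continuous motion planner (local section of the path evaluation map) over `U`. -/
def HasMotionPlanner (X : Type*) [TopologicalSpace X] (U : Set (X × X)) : Prop :=
  ∃ s : U → C(unitInterval, X), Continuous s ∧
    ∀ p : U, s p 0 = (p : X × X).1 ∧ s p 1 = (p : X × X).2

/-- Farber's topological complexity: the minimal number `k` of open sets covering `X × X`,
each admitting a continuous local section of the path evaluation map; `⊤` if none exists. -/
noncomputable def topComplexity (X : Type*) [TopologicalSpace X] : ℕ∞ :=
  sInf {N : ℕ∞ | ∃ k : ℕ, N = k ∧ ∃ U : Fin k → Set (X × X),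
    (∀ i, IsOpen (U i)) ∧ (∀ p, ∃ i, p ∈ U i) ∧ ∀ i, HasMotionPlanner X (U i)}

open ContinuousMap unitInterval in
lemma pullback_planner {X Y : Type*} [TopologicalSpace X] [TopologicalSpace Y]
    (f : C(X, Y)) (g : C(Y, X)) (H : (g.comp f).Homotopy (ContinuousMap.id X))
    (V : Set (Y × Y)) (hV : HasMotionPlanner Y V) :
    HasMotionPlanner X ((fun p : X × X => (f p.1, f p.2)) ⁻¹' V) := by
  obtain ⟨s, hs, hse⟩ := hV
  set U : Set (X × X) := (fun p : X × X => (f p.1, f p.2)) ⁻¹' V with hU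
  let q : U → V := fun p => ⟨(f (p : X × X).1, f (p : X × X).2), p.2⟩
  have hq : Continuous q := by
    apply Continuous.subtype_mk
    fun_prop
  let pa : ∀ p : U, Path (g (f (p : X × X).1)) ((p : X × X).1) := fun p =>
    { toFun := fun t => H (t, (p : X × X).1)
      continuous_toFun := H.continuous.comp (by fun_prop)
      source' := by simpa using H.apply_zero ((p : X × X).1)
      target' := by simpa using H.apply_one ((p : X × X).1) }
  let pb : ∀ p : U, Path (g (f (p : X × X).2)) ((p : X × X).2) := fun p =>
    { toFun := fun t => H (t, (p : X × X).2)
      continuous_toFun := H.continuous.comp (by fun_prop)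
      source' := by simpa using H.apply_zero ((p : X × X).2)
      target' := by simpa using H.apply_one ((p : X × X).2) }
  let mid : ∀ p : U, Path (g (f (p : X × X).1)) (g (f (p : X × X).2)) := fun p =>
    { toFun := fun t => g (s (q p) t)
      continuous_toFun := g.continuous.comp ((map_continuous (s (q p))))
      source' := by show g (s (q p) 0) = _; rw [(hse (q p)).1]
      target' := by show g (s (q p) 1) = _; rw [(hse (q p)).2] }
  have hpa : Continuous ↿pa := by
    show Continuous fun z : U × unitInterval => H (z.2, (z.1 : X × X).1)
    exact H.continuous.comp (by fun_prop)
  have hpb : Continuous ↿pb := by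
    show Continuous fun z : U × unitInterval => H (z.2, (z.1 : X × X).2)
    exact H.continuous.comp (by fun_prop)
  have hmid : Continuous ↿mid := by
    show Continuous fun z : U × unitInterval => g (s (q z.1) z.2)
    exact g.continuous.comp (ContinuousEval.continuous_eval.comp
      ((hs.comp (hq.comp continuous_fst)).prodMk continuous_snd))
  let γ : ∀ p : U, Path ((p : X × X).1) ((p : X × X).2) := fun p =>
    ((pa p).symm.trans (mid p)).trans (pb p)
  have hγ : Continuous ↿γ :=
    Path.trans_continuous_family _
      (Path.trans_continuous_family _ (Path.symm_continuous_family _ hpa) _ hmid) _ hpb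
  refine ⟨fun p => (γ p).toContinuousMap, ?_, ?_⟩
  · exact ContinuousMap.continuous_of_continuous_uncurry _ hγ
  · intro p
    exact ⟨(γ p).source, (γ p).target⟩

lemma tc_le {X Y : Type*} [TopologicalSpace X] [TopologicalSpace Y]
    (e : ContinuousMap.HomotopyEquiv X Y) : topComplexity X ≤ topComplexity Y := by
  apply sInf_le_sInf
  rintro N ⟨k, rfl, V, hVopen, hVcover, hVplan⟩
  obtain ⟨H⟩ := e.left_inv
  refine ⟨k, rfl, fun i => (fun p : X × X => (e.toFun p.1, e.toFun p.2)) ⁻¹' V i, ?_, ?_, ?_⟩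
  · intro i
    exact (hVopen i).preimage (by fun_prop)
  · intro p
    obtain ⟨i, hi⟩ := hVcover (e.toFun p.1, e.toFun p.2)
    exact ⟨i, hi⟩
  · intro i
    exact pullback_planner e.toFun e.invFun H (V i) (hVplan i)

/-- Topological complexity is a homotopy invariant. -/
theorem tc_homotopy_invariant (X Y : Type*) [TopologicalSpace X] [TopologicalSpace Y]
    (h : Nonempty (ContinuousMap.HomotopyEquiv X Y)) : topComplexity X = topComplexity Y := by
  obtain ⟨e⟩ := h
  exact le_antisymm (tc_le e) (tc_le e.symm)
end

section
/- TC(S¹) = 2: the product S¹ × S¹ is covered by the two open sets U = {(a,b) | b ≠ -a} and V = {(a,b) | b ≠ a}, each admitting a continuous local section of the path evaluation map, and no single open set covering S¹ × S¹ admits such a section. -/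
/-!
On the unit circle in `ℂ` the two sets are where `b / a` avoids `-1`, resp. `1`; there the angle
of `b / a` can be chosen continuously, and rotating `a` through that angle moves it to `b`.
A motion planner on all of `S¹ × S¹` would contract `S¹` to a point. Lifting the contraction
through the covering `exp : ℝ → S¹` gives a continuous logarithm `θ` on the circle, and then
`θ z - θ (-z)` is odd and never vanishes (its exponential is `-1`), which contradicts the
intermediate value theorem.
-/

open Set

open Function unitInterval

namespace HasMotionPlanner

variable {X Y : Type*} [TopologicalSpace X] [TopologicalSpace Y]

theorem of_continuous_family {U : Set (X × X)} (F : U × I → X) (hF : Continuous F)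
    (h₀ : ∀ p : U, F (p, 0) = (p : X × X).1) (h₁ : ∀ p : U, F (p, 1) = (p : X × X).2) :
    HasMotionPlanner X U :=
  ⟨ContinuousMap.curry ⟨F, hF⟩, (ContinuousMap.curry ⟨F, hF⟩).continuous,
    fun p => ⟨h₀ p, h₁ p⟩⟩

theorem preimage_homeomorph (e : X ≃ₜ Y) {W : Set (Y × Y)} (h : HasMotionPlanner Y W) :
    HasMotionPlanner X (Prod.map e e ⁻¹' W) := by
  obtain ⟨s, hs, hends⟩ := h
  refine ⟨fun p => (e.symm : C(Y, X)).comp (s ⟨Prod.map e e p, p.2⟩), ?_, fun p => ?_⟩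
  · fun_prop
  · simp [hends]

theorem contractibleSpace [Nonempty X] (h : HasMotionPlanner X univ) : ContractibleSpace X := by
  obtain ⟨s, hs, hends⟩ := h
  obtain ⟨x₀⟩ := ‹Nonempty X›
  refine (contractible_iff_id_nullhomotopic X).2 ⟨x₀, ⟨?_⟩⟩
  exact
    { toFun := fun q => s ⟨(q.2, x₀), trivial⟩ q.1
      continuous_toFun := by fun_prop
      map_zero_left := fun x => (hends _).1
      map_one_left := fun x => (hends _).2 }

end HasMotionPlanner

section topComplexity

variable {X : Type*} [TopologicalSpace X]

theorem topComplexity_le_two {U V : Set (X × X)} (hU : IsOpen U) (hV : IsOpen V)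
    (hUV : U ∪ V = univ) (hsU : HasMotionPlanner X U) (hsV : HasMotionPlanner X V) :
    topComplexity X ≤ 2 := by
  refine sInf_le ⟨2, rfl, ![U, V], Fin.forall_fin_two.2 ⟨hU, hV⟩, fun p => ?_,
    Fin.forall_fin_two.2 ⟨hsU, hsV⟩⟩
  rcases hUV.symm ▸ mem_univ p with hp | hp
  exacts [⟨0, hp⟩, ⟨1, hp⟩]

theorem two_le_topComplexity [Nonempty X] (h : ¬ HasMotionPlanner X univ) :
    2 ≤ topComplexity X := by
  refine le_sInf ?_
  rintro _ ⟨k, rfl, U, -, hcover, hplanner⟩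
  by_contra! hk
  have hk : k < 2 := by exact_mod_cast hk
  obtain ⟨x⟩ := ‹Nonempty X›
  obtain ⟨i, -⟩ := hcover (x, x)
  have hU : U i = univ := eq_univ_of_forall fun p => by
    obtain ⟨j, hj⟩ := hcover p
    rwa [show j = i from Fin.ext (by omega)] at hj
  exact h (hU ▸ hplanner i)

end topComplexity

namespace Circle

open Complex Real

theorem exp_pi : exp π = -1 := by
  ext1; simp [exp_pi_mul_I]

theorem coe_mem_slitPlane {z : Circle} (hz : z ≠ -1) : (z : ℂ) ∈ slitPlane := by
  refine mem_slitPlane_iff_arg.2 ⟨fun h => hz ?_, z.coe_ne_zero⟩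
  rw [← arg_eq_arg, h, coe_neg, coe_one, arg_neg_one]

theorem continuousOn_arg : ContinuousOn (fun z : Circle => arg z) {-1}ᶜ := fun _ hz =>
  ((continuousAt_arg (coe_mem_slitPlane hz)).comp continuous_subtype_val.continuousAt)
    |>.continuousWithinAt

theorem not_continuous_of_leftInverse_exp {θ : Circle → ℝ} (hθ : LeftInverse exp θ) :
    ¬ Continuous θ := by
  intro hcont
  set ψ : Circle → ℝ := fun z => θ z - θ (-z)
  have hψ_odd : ∀ z, ψ (-z) = -ψ z := fun z => by simp only [ψ, neg_neg]; ring
  have hψ_ne : ∀ z, ψ z ≠ 0 := fun z h => by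
    have : exp (ψ z) = -1 := by rw [exp_sub, hθ, hθ, div_neg, div_self']
    rw [h, exp_zero] at this
    exact neg_ne_self (1 : Circle) this.symm
  have hψ : Continuous ψ := by fun_prop
  obtain ⟨z, hz⟩ : (0 : ℝ) ∈ range ψ := by
    rcases le_total (ψ 1) 0 with h | h
    · exact mem_range_of_exists_le_of_exists_ge hψ ⟨1, h⟩ ⟨-1, by linarith [hψ_odd 1]⟩
    · exact mem_range_of_exists_le_of_exists_ge hψ ⟨-1, by linarith [hψ_odd 1]⟩ ⟨1, h⟩
  exact hψ_ne z hz

theorem not_contractibleSpace : ¬ ContractibleSpace Circle := by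
  intro h
  obtain ⟨c, ⟨H⟩⟩ := (contractible_iff_id_nullhomotopic Circle).1 h
  have hH₀ : ∀ z, H.symm.toContinuousMap (0, z) = exp (ContinuousMap.const Circle (arg c) z) :=
    fun z => by simp
  refine not_continuous_of_leftInverse_exp
    (θ := fun z => isCoveringMap_exp.liftHomotopy H.symm.toContinuousMap _ hH₀ (1, z))
    (fun z => ?_) (by fun_prop)
  exact (congr_fun (isCoveringMap_exp.liftHomotopy_lifts _ _ hH₀) (1, z)).trans (by simp)

theorem not_hasMotionPlanner_univ : ¬ HasMotionPlanner Circle univ :=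
  fun h => not_contractibleSpace h.contractibleSpace

theorem hasMotionPlanner_of_exp_eq_div {W : Set (Circle × Circle)} {θ : Circle × Circle → ℝ}
    (hθ : ContinuousOn θ W) (hexp : ∀ p ∈ W, exp (θ p) = p.2 / p.1) :
    HasMotionPlanner Circle W :=
  .of_continuous_family (fun q => q.1.1.1 * exp (q.2 * θ q.1))
    (continuous_fst.subtype_val.fst.mul <| exp.continuous.comp <| continuous_snd.subtype_val.mul <|
      (continuousOn_iff_continuous_domRestrict.1 hθ).comp continuous_fst)
    (fun p => by simp) (fun p => by simp [hexp p p.2])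

theorem hasMotionPlanner_ne_neg : HasMotionPlanner Circle {p | p.2 ≠ -p.1} := by
  refine hasMotionPlanner_of_exp_eq_div (θ := fun p => arg (p.2 / p.1 : Circle))
    ?_ fun p _ => exp_arg _
  refine continuousOn_arg.comp (by fun_prop) fun p hp h => hp ?_
  rwa [mem_singleton_iff, div_eq_iff_eq_mul, neg_one_mul] at h

theorem hasMotionPlanner_ne : HasMotionPlanner Circle {p | p.2 ≠ p.1} := by
  -- `arg (-w) + π` is the angle of `w` taken in `(0, 2π]`, continuous away from `w = 1`
  refine hasMotionPlanner_of_exp_eq_div (θ := fun p => arg (-(p.2 / p.1) : Circle) + π)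
    ?_ fun p _ => by rw [exp_add, exp_arg, exp_pi, neg_mul_neg, mul_one]
  refine ContinuousOn.add ?_ continuousOn_const
  refine continuousOn_arg.comp (by fun_prop) fun p hp h => hp ?_
  rwa [mem_singleton_iff, neg_inj, div_eq_one] at h

theorem ne_neg_union_ne : {p : Circle × Circle | p.2 ≠ -p.1} ∪ {p | p.2 ≠ p.1} = univ :=
  eq_univ_of_forall fun p => by
    by_cases h : p.2 = -p.1
    · exact Or.inr (show p.2 ≠ p.1 by rw [h]; exact neg_ne_self _)
    · exact Or.inl h

end Circle

namespace S1

noncomputable def homeomorphCircle : S1 ≃ₜ Circle :=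
  (Complex.equivRealProdCLM.toHomeomorph.subtype (p := (· ∈ Submonoid.unitSphere ℂ))
    fun z => by simp [Submonoid.unitSphere, Complex.norm_def, Complex.normSq_apply, sq]).symm

theorem coe_homeomorphCircle (x : S1) :
    (homeomorphCircle x : ℂ) = Complex.equivRealProdCLM.symm x := rfl

theorem homeomorphCircle_eq_neg_iff {x y : S1} :
    homeomorphCircle y = -homeomorphCircle x ↔ (y : ℝ × ℝ) = -(x : ℝ × ℝ) := by
  rw [← Circle.coe_inj, Circle.coe_neg, coe_homeomorphCircle, coe_homeomorphCircle,
    ← map_neg, Complex.equivRealProdCLM.symm.injective.eq_iff]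

end S1

/-- `topComplexity(S¹) = 2`: the two open sets `U = {(a,b) | b ≠ -a}` and `V = {(a,b) | b ≠ a}` cover
`S¹ × S¹` and each admits a continuous local section of the path evaluation map, while no
single open set covering `S¹ × S¹` (i.e. all of `S¹ × S¹`) admits such a section. -/
theorem tc_circle_eq_two :
    topComplexity ↥S1 = 2 ∧
    IsOpen {p : ↥S1 × ↥S1 | (p.2 : ℝ × ℝ) ≠ -(p.1 : ℝ × ℝ)} ∧
    IsOpen {p : ↥S1 × ↥S1 | p.2 ≠ p.1} ∧
    {p : ↥S1 × ↥S1 | (p.2 : ℝ × ℝ) ≠ -(p.1 : ℝ × ℝ)} ∪ {p : ↥S1 × ↥S1 | p.2 ≠ p.1} = univ ∧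
    HasMotionPlanner ↥S1 {p : ↥S1 × ↥S1 | (p.2 : ℝ × ℝ) ≠ -(p.1 : ℝ × ℝ)} ∧
    HasMotionPlanner ↥S1 {p : ↥S1 × ↥S1 | p.2 ≠ p.1} ∧
    ¬ HasMotionPlanner ↥S1 (univ : Set (↥S1 × ↥S1)) := by
  set e := S1.homeomorphCircle
  have hU : {p : ↥S1 × ↥S1 | (p.2 : ℝ × ℝ) ≠ -(p.1 : ℝ × ℝ)} =
      Prod.map e e ⁻¹' {q | q.2 ≠ -q.1} := by
    ext p; simp [e, S1.homeomorphCircle_eq_neg_iff]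
  have hV : {p : ↥S1 × ↥S1 | p.2 ≠ p.1} = Prod.map e e ⁻¹' {q | q.2 ≠ q.1} := by
    ext p; simp [e.injective.eq_iff]
  have hopenU : IsOpen {p : ↥S1 × ↥S1 | (p.2 : ℝ × ℝ) ≠ -(p.1 : ℝ × ℝ)} :=
    isOpen_ne_fun (by fun_prop) (by fun_prop)
  have hopenV : IsOpen {p : ↥S1 × ↥S1 | p.2 ≠ p.1} := isOpen_ne_fun (by fun_prop) (by fun_prop)
  have hcover : {p : ↥S1 × ↥S1 | (p.2 : ℝ × ℝ) ≠ -(p.1 : ℝ × ℝ)} ∪ {p | p.2 ≠ p.1} = univ := by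
    rw [hU, hV, ← preimage_union, Circle.ne_neg_union_ne, preimage_univ]
  have hplanU := hU ▸ Circle.hasMotionPlanner_ne_neg.preimage_homeomorph e
  have hplanV := hV ▸ Circle.hasMotionPlanner_ne.preimage_homeomorph e
  have hglobal : ¬ HasMotionPlanner S1 univ := fun h =>
    Circle.not_hasMotionPlanner_univ (by simpa using h.preimage_homeomorph e.symm)
  have : Nonempty S1 := ⟨e.symm 1⟩
  exact ⟨le_antisymm (topComplexity_le_two hopenU hopenV hcover hplanU hplanV)
    (two_le_topComplexity hglobal), hopenU, hopenV, hcover, hplanU, hplanV, hglobal⟩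
end

section
/- The set U = {(a,b) ∈ S¹ × S¹ | b ≠ -a} admits a continuous local section of the path evaluation map, given by 'follow the shortest geodesic arc from a to b'. -/
open Set

/-! The point at time `t` of the shortest arc from `a` to `b` is the radial projection onto the
circle of the point `(1 - t) • a + t • b` of the chord. The chord passes through the origin only
when `b = -a` (and then at `t = 1/2`), so away from antipodal pairs the projection is continuous
in `(a, b, t)`, and currying gives a continuous map into `C(unitInterval, S1)`. -/

noncomputable def radialProj (c : ℝ × ℝ) : ℝ × ℝ := (Real.sqrt (c.1 ^ 2 + c.2 ^ 2))⁻¹ • c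

lemma sq_add_sq_pos_of_ne_zero {c : ℝ × ℝ} (hc : c ≠ 0) : 0 < c.1 ^ 2 + c.2 ^ 2 := by
  rcases eq_or_ne c.1 0 with h1 | h1
  · have h2 : c.2 ≠ 0 := fun h2 => hc (Prod.ext h1 h2)
    positivity
  · positivity

lemma radialProj_mem_S1 {c : ℝ × ℝ} (hc : c ≠ 0) : radialProj c ∈ S1 := by
  have hpos := sq_add_sq_pos_of_ne_zero hc
  have hsq := Real.sq_sqrt hpos.le
  have hne := (Real.sqrt_pos.mpr hpos).ne'
  show ((Real.sqrt _)⁻¹ * c.1) ^ 2 + ((Real.sqrt _)⁻¹ * c.2) ^ 2 = 1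
  field_simp
  linarith

lemma radialProj_of_mem_S1 {c : ℝ × ℝ} (hc : c ∈ S1) : radialProj c = c := by
  simp only [radialProj, hc.out, Real.sqrt_one, inv_one, one_smul]

lemma continuousOn_radialProj : ContinuousOn radialProj {0}ᶜ := by
  have hsqrt : Continuous fun c : ℝ × ℝ => Real.sqrt (c.1 ^ 2 + c.2 ^ 2) := by fun_prop
  refine (hsqrt.continuousOn.inv₀ fun c hc => ?_).smul continuousOn_id
  exact (Real.sqrt_pos.mpr (sq_add_sq_pos_of_ne_zero hc)).ne'

lemma smul_add_smul_ne_zero_of_ne_neg {a b : ℝ × ℝ} (ha : a ∈ S1) (hb : b ∈ S1) (hab : b ≠ -a)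
    (t : ℝ) : (1 - t) • a + t • b ≠ 0 := by
  intro h
  have h1 : (1 - t) * a.1 + t * b.1 = 0 := congrArg Prod.fst h
  have h2 : (1 - t) * a.2 + t * b.2 = 0 := congrArg Prod.snd h
  have ha' : a.1 ^ 2 + a.2 ^ 2 = 1 := ha
  have hb' : b.1 ^ 2 + b.2 ^ 2 = 1 := hb
  -- comparing the squared lengths of `(1 - t) • a = -t • b` forces `(1 - t) ^ 2 = t ^ 2`
  have ht : t = 1 / 2 := by
    linear_combination (-(1 / 2) * ((1 - t) * a.1 - t * b.1)) * h1
      + (-(1 / 2) * ((1 - t) * a.2 - t * b.2)) * h2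
      + (1 / 2 * (1 - t) ^ 2) * ha' - (1 / 2 * t ^ 2) * hb'
  subst ht
  refine hab (Prod.ext ?_ ?_)
  · simpa only [Prod.fst_neg] using (by linear_combination 2 * h1 : b.1 = -a.1)
  · simpa only [Prod.snd_neg] using (by linear_combination 2 * h2 : b.2 = -a.2)

/-- `U = {(a,b) | b ≠ -a}` admits a continuous local section of the path evaluation map,
given by following the shortest geodesic arc from `a` to `b` (obtained by radially
projecting the chord from `a` to `b` onto the circle). -/
theorem shortest_path_section :
    ∃ s : ↥{p : ↥S1 × ↥S1 | (p.2 : ℝ × ℝ) ≠ -(p.1 : ℝ × ℝ)} → C(unitInterval, ↥S1),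
      Continuous s ∧
      (∀ p, s p 0 = (p : ↥S1 × ↥S1).1 ∧ s p 1 = (p : ↥S1 × ↥S1).2) ∧
      ∀ p, ∀ t : unitInterval,
        ((s p t : ℝ × ℝ)) =
          (Real.sqrt ((((1:ℝ) - t) • ((p : ↥S1 × ↥S1).1 : ℝ × ℝ) +
              (t : ℝ) • ((p : ↥S1 × ↥S1).2 : ℝ × ℝ)).1 ^ 2 +
            (((1:ℝ) - t) • ((p : ↥S1 × ↥S1).1 : ℝ × ℝ) +
              (t : ℝ) • ((p : ↥S1 × ↥S1).2 : ℝ × ℝ)).2 ^ 2))⁻¹ •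
          (((1:ℝ) - t) • ((p : ↥S1 × ↥S1).1 : ℝ × ℝ) +
            (t : ℝ) • ((p : ↥S1 × ↥S1).2 : ℝ × ℝ)) := by
  set U := {p : ↥S1 × ↥S1 | (p.2 : ℝ × ℝ) ≠ -(p.1 : ℝ × ℝ)}
  let chord : U × unitInterval → ℝ × ℝ := fun q =>
    (1 - (q.2 : ℝ)) • ((q.1 : ↥S1 × ↥S1).1 : ℝ × ℝ) + (q.2 : ℝ) • ((q.1 : ↥S1 × ↥S1).2 : ℝ × ℝ)
  have chord_ne_zero (q : U × unitInterval) : chord q ≠ 0 :=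
    smul_add_smul_ne_zero_of_ne_neg (q.1 : ↥S1 × ↥S1).1.2 (q.1 : ↥S1 × ↥S1).2.2 q.1.2 q.2
  let arc : C(U × unitInterval, ↥S1) :=
    ⟨fun q => ⟨radialProj (chord q), radialProj_mem_S1 (chord_ne_zero q)⟩,
      (continuousOn_radialProj.comp_continuous (by fun_prop) chord_ne_zero).subtype_mk _⟩
  refine ⟨arc.curry, arc.curry.continuous, fun p => ⟨?_, ?_⟩, fun p t => rfl⟩ <;>
    ext1 <;> simp [arc, chord, radialProj_of_mem_S1]
end

section
/- The set V = {(a,b) ∈ S¹ × S¹ | b ≠ a} admits a continuous local section of the path evaluation map, given by 'move counterclockwise from a to b'. -/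
open Set

/-- Rotation of the plane by the angle `θ`. -/
noncomputable def rot (θ : ℝ) (p : ℝ × ℝ) : ℝ × ℝ :=
  (Real.cos θ * p.1 - Real.sin θ * p.2, Real.sin θ * p.1 + Real.cos θ * p.2)

/-!
Identify `ℝ²` with `ℂ`. For `a ≠ b` on the circle, `b / a` is a unit complex number other than `1`,
so `-(b / a)` lies in the slit plane, where `arg` is continuous. Hence `θ = π + arg (-(b / a))`
depends continuously on `(a, b)`, lies in `(0, 2π)` and satisfies `b = e^{iθ} a`.
-/

open Complex

namespace Complex

/-- The argument of `z` taken in `(0, 2π]` rather than `(-π, π]`. -/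
noncomputable def ccwArg (z : ℂ) : ℝ := Real.pi + arg (-z)

lemma ccwArg_mem_Ioo {z : ℂ} (hz : -z ∈ slitPlane) : ccwArg z ∈ Ioo 0 (2 * Real.pi) := by
  have h₁ := neg_pi_lt_arg (-z)
  have h₂ : arg (-z) < Real.pi := arg_lt_pi_iff.2 ((mem_slitPlane_iff.1 hz).imp le_of_lt id)
  constructor <;> unfold ccwArg <;> linarith

lemma exp_ccwArg_mul_I {z : ℂ} (hz : ‖z‖ = 1) : exp (ccwArg z * I) = z := by
  have h := norm_mul_exp_arg_mul_I (-z)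
  rw [norm_neg, hz, ofReal_one, one_mul] at h
  rw [ccwArg, ofReal_add, add_mul, exp_add, exp_pi_mul_I, h, neg_one_mul, neg_neg]

lemma continuousAt_ccwArg {z : ℂ} (hz : -z ∈ slitPlane) : ContinuousAt ccwArg z :=
  continuousAt_const.add ((continuousAt_arg hz).comp continuousAt_neg)

lemma neg_mem_slitPlane_of_norm_eq_one {z : ℂ} (h : ‖z‖ = 1) (hz : z ≠ 1) :
    -z ∈ slitPlane := by
  have := subset_slitPlane_iff_of_subset_sphere (s := {-z}) (r := 1) (by simpa using h)
  simp only [singleton_subset_iff, ofReal_one, mem_singleton_iff, neg_inj] at this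
  exact this.2 hz.symm

end Complex

lemma rot_mem_S1 (θ : ℝ) {p : ℝ × ℝ} (hp : p ∈ S1) : rot θ p ∈ S1 := by
  have := Real.sin_sq_add_cos_sq θ
  simp only [S1, mem_ofPred_eq, rot] at hp ⊢
  linear_combination (p.1 ^ 2 + p.2 ^ 2) * this + hp

@[simp]
lemma rot_zero (p : ℝ × ℝ) : rot 0 p = p := by simp [rot]

@[fun_prop]
lemma Continuous.rot {X : Type*} [TopologicalSpace X] {f : X → ℝ} {g : X → ℝ × ℝ}
    (hf : Continuous f) (hg : Continuous g) : Continuous fun x => rot (f x) (g x) := by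
  unfold _root_.rot; fun_prop

lemma equivRealProdCLM_symm_rot (θ : ℝ) (p : ℝ × ℝ) :
    equivRealProdCLM.symm (rot θ p) = exp (θ * I) * equivRealProdCLM.symm p := by
  rw [exp_mul_I, ← ofReal_cos, ← ofReal_sin]
  apply Complex.ext <;> simp [rot, equivRealProdCLM_symm_apply]; ring

lemma norm_equivRealProdCLM_symm_of_mem_S1 {p : ℝ × ℝ} (hp : p ∈ S1) :
    ‖equivRealProdCLM.symm p‖ = 1 := by
  rw [equivRealProdCLM_symm_apply, norm_add_mul_I, hp, Real.sqrt_one]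

noncomputable def ccwAngle (a b : ℝ × ℝ) : ℝ :=
  ccwArg (equivRealProdCLM.symm b / equivRealProdCLM.symm a)

section ccwAngle

variable {a b : ℝ × ℝ}

lemma norm_div_equivRealProdCLM_symm (ha : a ∈ S1) (hb : b ∈ S1) :
    ‖equivRealProdCLM.symm b / equivRealProdCLM.symm a‖ = 1 := by
  rw [norm_div, norm_equivRealProdCLM_symm_of_mem_S1 ha, norm_equivRealProdCLM_symm_of_mem_S1 hb,
    div_one]

lemma equivRealProdCLM_symm_ne_zero (ha : a ∈ S1) : equivRealProdCLM.symm a ≠ 0 :=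
  norm_ne_zero_iff.1 (by rw [norm_equivRealProdCLM_symm_of_mem_S1 ha]; exact one_ne_zero)

lemma neg_div_equivRealProdCLM_symm_mem_slitPlane (ha : a ∈ S1) (hb : b ∈ S1) (hab : b ≠ a) :
    -(equivRealProdCLM.symm b / equivRealProdCLM.symm a) ∈ slitPlane := by
  refine neg_mem_slitPlane_of_norm_eq_one (norm_div_equivRealProdCLM_symm ha hb) ?_
  rw [Ne, div_eq_one_iff_eq (equivRealProdCLM_symm_ne_zero ha)]
  exact equivRealProdCLM.symm.injective.ne hab

lemma rot_ccwAngle (ha : a ∈ S1) (hb : b ∈ S1) : rot (ccwAngle a b) a = b := by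
  apply equivRealProdCLM.symm.injective
  rw [equivRealProdCLM_symm_rot, ccwAngle, exp_ccwArg_mul_I (norm_div_equivRealProdCLM_symm ha hb),
    div_mul_cancel₀ _ (equivRealProdCLM_symm_ne_zero ha)]

lemma ccwAngle_mem_Ioo (ha : a ∈ S1) (hb : b ∈ S1) (hab : b ≠ a) :
    ccwAngle a b ∈ Ioo 0 (2 * Real.pi) :=
  ccwArg_mem_Ioo (neg_div_equivRealProdCLM_symm_mem_slitPlane ha hb hab)

end ccwAngle

lemma continuousOn_ccwAngle :
    ContinuousOn (fun q : (ℝ × ℝ) × (ℝ × ℝ) => ccwAngle q.1 q.2)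
      {q | q.1 ∈ S1 ∧ q.2 ∈ S1 ∧ q.2 ≠ q.1} := by
  rintro ⟨a, b⟩ ⟨ha, hb, hab⟩
  refine ContinuousAt.continuousWithinAt ?_
  refine (continuousAt_ccwArg (neg_div_equivRealProdCLM_symm_mem_slitPlane ha hb hab)).comp
    (f := fun q : (ℝ × ℝ) × (ℝ × ℝ) => equivRealProdCLM.symm q.2 / equivRealProdCLM.symm q.1) ?_
  exact ContinuousAt.div (by fun_prop) (by fun_prop) (equivRealProdCLM_symm_ne_zero ha)

/-- `V = {(a,b) | b ≠ a}` admits a continuous local section of the path evaluation map,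
given by moving counterclockwise from `a` to `b`: writing `b = a·e^{iθ}` with
`θ ∈ (0, 2π)`, the path is `t ↦ a·e^{itθ}`. -/
theorem counterclockwise_section :
    ∃ s : ↥{p : ↥S1 × ↥S1 | p.2 ≠ p.1} → C(unitInterval, ↥S1),
      Continuous s ∧
      (∀ p, s p 0 = (p : ↥S1 × ↥S1).1 ∧ s p 1 = (p : ↥S1 × ↥S1).2) ∧
      ∀ p : ↥{p : ↥S1 × ↥S1 | p.2 ≠ p.1}, ∃ θ ∈ Ioo (0:ℝ) (2 * Real.pi),
        ((p : ↥S1 × ↥S1).2 : ℝ × ℝ) = rot θ ((p : ↥S1 × ↥S1).1 : ℝ × ℝ) ∧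
        ∀ t : unitInterval, ((s p t : ℝ × ℝ)) = rot ((t : ℝ) * θ) ((p : ↥S1 × ↥S1).1 : ℝ × ℝ) := by
  set V := {p : ↥S1 × ↥S1 | p.2 ≠ p.1}
  let θ : V → ℝ := fun p => ccwAngle p.1.1 p.1.2
  have hθ : Continuous θ :=
    continuousOn_ccwAngle.comp_continuous (f := fun p : V => ((p.1.1 : ℝ × ℝ), (p.1.2 : ℝ × ℝ)))
      (by fun_prop)
      fun p : V => ⟨p.1.1.2, p.1.2.2, Subtype.val_injective.ne p.2⟩
  let s : V → C(unitInterval, S1) := fun p : V =>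
    ⟨fun t => ⟨rot (t * θ p) p.1.1, rot_mem_S1 _ p.1.1.2⟩, by fun_prop⟩
  have hs : Continuous s := ContinuousMap.continuous_of_continuous_uncurry _ <|
    (by fun_prop : Continuous fun q : V × unitInterval => rot (q.2 * θ q.1) q.1.1.1).subtype_mk _
  refine ⟨s, hs, fun p : V => ⟨?_, ?_⟩,
    fun p : V => ⟨θ p, ccwAngle_mem_Ioo p.1.1.2 p.1.2.2 (Subtype.val_injective.ne p.2),
      (rot_ccwAngle p.1.1.2 p.1.2.2).symm, fun t => rfl⟩⟩
  · ext1; simp [s]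
  · ext1; simp [s, θ, rot_ccwAngle p.1.1.2 p.1.2.2]
end
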